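/- The global transformation τ_e induced by an injective pattern e is surjective (hence bijective, i.e., the cellular automaton is reversible), and its inverse is τ_e itself. -/

import Mathlib

/-!
Injectivity of the pattern says that two occurrences of `e` never overlap: occurrences at
distinct positions are more than `R` apart. Since `τ_e` only flips centres of occurrences,
and no such centre lies in the window of another occurrence, `τ_e` leaves every occurrence
intact and creates no new one. So `τ_e c` and `c` have the same occurrences, and applying
`τ_e` twice flips each of their centres twice.
-/

/-- `c` matches the pattern `e` (with radii `L`, `R`, wildcard at position 0) at `n`. -/
def Matches (L R : ℕ) (e : ℤ → ZMod 2) (c : ℤ → ZMod 2) (n : ℤ) : Prop :=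
  ∀ j : ℤ, -(L : ℤ) ≤ j → j ≤ (R : ℤ) → j ≠ 0 → c (n + j) = e j

/-- `e` is an injective pattern for radii `L`, `R`: every prefix sub-string containing
the wildcard differs from the suffix sub-string of the same length. -/
def IsInjectivePattern (L R : ℕ) (e : ℤ → ZMod 2) : Prop :=
  ∀ s : ℤ, 1 ≤ s → s ≤ (R : ℤ) →
    ∃ j : ℤ, -(L : ℤ) ≤ j ∧ j ≤ (R : ℤ) - s ∧ j ≠ 0 ∧ j + s ≠ 0 ∧ e j ≠ e (j + s)

open Classical in
/-- The global transformation induced by the pattern `e`. -/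
noncomputable def tau (L R : ℕ) (e : ℤ → ZMod 2) (c : ℤ → ZMod 2) : ℤ → ZMod 2 :=
  fun n => if Matches L R e c n then 1 + c n else c n

theorem tau_apply_of_not_matches {L R : ℕ} {e c : ℤ → ZMod 2} {n : ℤ}
    (h : ¬ Matches L R e c n) : tau L R e c n = c n :=
  if_neg h

theorem tau_tau_apply_of_matches {L R : ℕ} {e c : ℤ → ZMod 2} {n : ℤ}
    (h : Matches L R e c n) (h' : Matches L R e (tau L R e c) n) :
    tau L R e (tau L R e c) n = c n := by
  simp only [tau, if_pos h, if_pos h', CharTwo.add_cancel_left]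

namespace IsInjectivePattern

variable {L R : ℕ} {e : ℤ → ZMod 2}

theorem not_matches_add {c : ℤ → ZMod 2} {n s : ℤ} (he : IsInjectivePattern L R e)
    (hs : 1 ≤ s) (hsR : s ≤ R) (hn : Matches L R e c n) : ¬ Matches L R e c (n + s) := by
  intro hns
  obtain ⟨j, hjL, hjR, hj, hjs, hne⟩ := he s hs hsR
  -- both occurrences read the cell `n + s + j`, at offsets `j + s` and `j`
  have h₁ := hn (j + s) (by omega) (by omega) hjs
  have h₂ := hns j hjL (by omega) hj
  rw [add_assoc, add_comm s j] at h₂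
  exact hne (h₂.symm.trans h₁)

theorem eq_of_matches {c : ℤ → ZMod 2} {m n : ℤ} (he : IsInjectivePattern L R e)
    (hm : Matches L R e c m) (hn : Matches L R e c n) (hmn : |m - n| ≤ R) : m = n := by
  rw [abs_le] at hmn
  rcases lt_trichotomy m n with hlt | heq | hgt
  · exact absurd (add_sub_cancel m n ▸ hn) (he.not_matches_add (by omega) (by omega) hm)
  · exact heq
  · exact absurd (add_sub_cancel n m ▸ hm) (he.not_matches_add (by omega) (by omega) hn)

theorem not_matches_add_of_matches {c : ℤ → ZMod 2} {n j : ℤ} (he : IsInjectivePattern L R e)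
    (hLR : L ≤ R) (hjL : -(L : ℤ) ≤ j) (hjR : j ≤ R) (hj : j ≠ 0) (hn : Matches L R e c n) :
    ¬ Matches L R e c (n + j) := fun hnj =>
  hj <| by
    have := he.eq_of_matches hnj hn (by rw [add_sub_cancel_left, abs_le]; omega)
    omega

theorem matches_tau_of_matches {c : ℤ → ZMod 2} {n : ℤ} (he : IsInjectivePattern L R e)
    (hLR : L ≤ R) (hn : Matches L R e c n) : Matches L R e (tau L R e c) n :=
  fun j hjL hjR hj => by
    rw [tau_apply_of_not_matches (he.not_matches_add_of_matches hLR hjL hjR hj hn)]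
    exact hn j hjL hjR hj

theorem matches_tau_iff {c : ℤ → ZMod 2} {n : ℤ} (he : IsInjectivePattern L R e)
    (hLR : L ≤ R) : Matches L R e (tau L R e c) n ↔ Matches L R e c n := by
  refine ⟨fun htn => ?_, he.matches_tau_of_matches hLR⟩
  by_contra hn
  obtain ⟨j, hjL, hjR, hj, hne⟩ : ∃ j, -(L : ℤ) ≤ j ∧ j ≤ R ∧ j ≠ 0 ∧ c (n + j) ≠ e j := by
    simpa [Matches] using hn
  -- `τ_e` changed the cell `n + j`, so `c` has an occurrence at `n + j`, which survives in `τ_e c`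
  have hnj : Matches L R e c (n + j) := by
    by_contra hnj
    exact hne (tau_apply_of_not_matches hnj ▸ htn j hjL hjR hj)
  exact he.not_matches_add_of_matches hLR hjL hjR hj htn (he.matches_tau_of_matches hLR hnj)

theorem tau_involutive (he : IsInjectivePattern L R e) (hLR : L ≤ R) :
    Function.Involutive (tau L R e) := fun c => funext fun n => by
  by_cases hn : Matches L R e c n
  · exact tau_tau_apply_of_matches hn ((he.matches_tau_iff hLR).mpr hn)
  · rw [tau_apply_of_not_matches (mt (he.matches_tau_iff hLR).mp hn),
      tau_apply_of_not_matches hn]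

end IsInjectivePattern

theorem tau_surjective_self_inverse_general (L R : ℕ) (hLR : L ≤ R)
    (e : ℤ → ZMod 2) (he : IsInjectivePattern L R e) :
    Function.Surjective (tau L R e) ∧ Function.Bijective (tau L R e) ∧
    Function.LeftInverse (tau L R e) (tau L R e) ∧
    Function.RightInverse (tau L R e) (tau L R e) := by
  have h := he.tau_involutive hLR
  exact ⟨h.surjective, h.bijective, h.leftInverse, h.rightInverse⟩

/-- the global transformation induced by an injective pattern is
surjective (hence bijective) and is its own inverse. -/
theorem tau_surjective_self_inverse (L R : ℕ) (hL : 1 ≤ L) (hLR : L ≤ R)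
    (e : ℤ → ZMod 2) (he : IsInjectivePattern L R e) :
    Function.Surjective (tau L R e) ∧ Function.Bijective (tau L R e) ∧
    Function.LeftInverse (tau L R e) (tau L R e) ∧
    Function.RightInverse (tau L R e) (tau L R e) :=
  tau_surjective_self_inverse_general L R hLR e he
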